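/- Let 0 < M ≤ 2c/a, κ̄ ∈ (0, M), and let σ satisfy a·(κ̄ − M/2) ≤ σ ≤ c + a·(κ̄ − M). Define U(κ) := [ ((m+1)/a)·( G(a·(M − κ̄) + σ) − G(a·(κ − κ̄) + σ) ) ]^{1/(m+1)} for κ ∈ [0, M]. Then: the quantity inside the brackets is nonnegative on [0,M], so U is well defined; U is continuous on [0, M] and continuously differentiable on (0, M); U(M) = 0 and U(κ) > 0 for all κ ∈ (0, M); and U(κ)^m·U'(κ) = −g( a·(κ − κ̄) + σ ) for every κ ∈ (0, M). Consequently, if ξ₋ ∈ ℝ, ξ₊ ∈ (ξ₋, +∞], and κ : [ξ₋, ξ₊) → [0, M) is a continuously differentiable solution of κ'(ξ) = U(κ(ξ)) with κ(ξ₋) = 0 and κ(ξ) → M as ξ → ξ₊, then υ := U ∘ κ satisfies κ'(ξ) = υ(ξ) and υ(ξ)^{m−1}·υ'(ξ) = −g( a·(κ(ξ) − κ̄) + σ ) for all ξ ∈ (ξ₋, ξ₊) with υ(ξ) > 0, and υ(ξ) → 0 as ξ → ξ₊. -/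

import Mathlib

open Set Filter Function Asymptotics MeasureTheory intervalIntegral Real Topology

/-!
Substituting `u = Φ y` turns `∫₀^c g` into `∫₀^∞ y Φ'(y) dy`, which is finite because `α > 1`;
so `g = Φ⁻¹`, being odd, continuous and positive on `(0, c)`, has a primitive `G` on `[-c, c]`
that is even and strictly increasing on `[0, c]`. The two bounds on `σ` say precisely that
`|a (κ - κ̄) + σ| ≤ a (M - κ̄) + σ ≤ c` on `[0, M]`, strictly inside, so the bracket defining `U` is
`G` evaluated at the right end minus `G` at a point of smaller modulus: nonnegative, and positive
on `(0, M)`. The identity `U^m U' = -g` is the chain rule for the power `1 / (m + 1)`. Along a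
solution, `κ` cannot vanish where `U(κ) > 0`, since `0` would be a local minimum of `κ` with
nonzero derivative, and `U(κ(ξ)) → U(M) = 0` by continuity of `U`.
-/

lemma isBigO_rpow_of_le {f : ℝ → ℝ} {C y₀ β : ℝ} (hf : ∀ y, 0 ≤ f y)
    (hle : ∀ y, y₀ ≤ y → f y ≤ C * y ^ β) : f =O[atTop] fun y => y ^ β := by
  refine IsBigO.of_bound C ?_
  filter_upwards [eventually_ge_atTop y₀, eventually_ge_atTop 0] with y hy₀ hy
  rw [norm_of_nonneg (hf y), norm_of_nonneg (rpow_nonneg hy _)]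
  exact hle y hy₀

section InverseFunction

variable {Φ : ℝ → ℝ} {b c : ℝ}

lemma StrictMono.range_eq_Ioo_of_tendsto (hmono : StrictMono Φ) (hΦ : Continuous Φ)
    (hbot : Tendsto Φ atBot (𝓝 b)) (htop : Tendsto Φ atTop (𝓝 c)) : range Φ = Ioo b c := by
  ext u
  constructor
  · rintro ⟨y, rfl⟩
    exact ⟨(hmono.monotone.le_of_tendsto hbot (y - 1)).trans_lt (hmono (sub_one_lt y)),
      (hmono (lt_add_one y)).trans_le (hmono.monotone.ge_of_tendsto htop (y + 1))⟩
  · rintro ⟨hbu, huc⟩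
    exact mem_range_of_exists_le_of_exists_ge hΦ
      ((hbot.eventually (eventually_lt_nhds hbu)).exists.imp fun _ => le_of_lt)
      ((htop.eventually (eventually_gt_nhds huc)).exists.imp fun _ => le_of_lt)

lemma tendsto_atBot_of_odd (hodd : Φ.Odd) (htop : Tendsto Φ atTop (𝓝 c)) :
    Tendsto Φ atBot (𝓝 (-c)) := by
  simpa [comp_def, hodd.eq] using (htop.comp tendsto_neg_atBot_atTop).neg

lemma StrictMono.strictMonoOn_invFun (hmono : StrictMono Φ) :
    StrictMonoOn (invFun Φ) (range Φ) := by
  rintro _ ⟨x, rfl⟩ _ ⟨y, rfl⟩ h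
  rwa [leftInverse_invFun hmono.injective x, leftInverse_invFun hmono.injective y,
    ← hmono.lt_iff_lt]

lemma StrictMono.continuousAt_invFun (hmono : StrictMono Φ) {u : ℝ} (hu : range Φ ∈ 𝓝 u) :
    ContinuousAt (invFun Φ) u := by
  have himage : invFun Φ '' range Φ = univ :=
    eq_univ_of_forall fun y => ⟨Φ y, mem_range_self y, leftInverse_invFun hmono.injective y⟩
  refine hmono.strictMonoOn_invFun.continuousAt_of_image_mem_nhds hu ?_
  rw [himage]
  exact univ_mem

lemma invFun_neg_of_odd (hinj : Injective Φ) (hodd : Φ.Odd) {u : ℝ}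
    (hu : u ∈ range Φ) : invFun Φ (-u) = -invFun Φ u := by
  obtain ⟨y, rfl⟩ := hu
  rw [← hodd.eq, leftInverse_invFun hinj, leftInverse_invFun hinj]

lemma invFun_pos (hmono : StrictMono Φ) (hΦ0 : Φ 0 = 0) {u : ℝ} (hu : u ∈ range Φ)
    (hu0 : 0 < u) : 0 < invFun Φ u := by
  obtain ⟨y, rfl⟩ := hu
  rwa [leftInverse_invFun hmono.injective, ← hmono.lt_iff_lt, hΦ0]

lemma integrableOn_Ioi_abs_deriv_mul {α : ℝ} (hΦ : ContDiff ℝ 1 Φ) (hα : 1 < α)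
    (hdecay : deriv Φ =O[atTop] fun y => y ^ (-α - 1)) :
    IntegrableOn (fun y => |deriv Φ y| * y) (Ioi 0) := by
  have hO : (fun y => |deriv Φ y| * y) =O[atTop] fun y => y ^ (-α) := by
    refine (hdecay.abs_left.mul (isBigO_refl id atTop)).congr' EventuallyEq.rfl ?_
    filter_upwards [eventually_gt_atTop 0] with y hy
    rw [id, ← rpow_add_one hy.ne', sub_add_cancel]
  have hcont : Continuous fun y => |deriv Φ y| * y :=
    (hΦ.continuous_deriv le_rfl).abs.mul continuous_id
  exact ((hcont.locallyIntegrable.locallyIntegrableOn (Ici 0)).integrableOn_of_isBigO_atTop hO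
    (integrableAtFilter_rpow_atTop_iff.mpr (by linarith))).mono_set Ioi_subset_Ici_self

lemma StrictMono.image_Ioi_zero (hmono : StrictMono Φ) (hΦ0 : Φ 0 = 0)
    (hrange : range Φ = Ioo (-c) c) : Φ '' Ioi 0 = Ioo 0 c := by
  ext u
  constructor
  · rintro ⟨y, hy, rfl⟩
    exact ⟨hΦ0 ▸ hmono hy, (hrange ▸ mem_range_self y : Φ y ∈ Ioo (-c) c).2⟩
  · rintro ⟨hu0, huc⟩
    obtain ⟨y, rfl⟩ : u ∈ range Φ := hrange ▸ ⟨by linarith, huc⟩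
    exact ⟨y, hmono.lt_iff_lt.mp (by rwa [hΦ0]), rfl⟩

lemma intervalIntegrable_invFun {α : ℝ} (hΦ : ContDiff ℝ 1 Φ) (hmono : StrictMono Φ)
    (hodd : Φ.Odd) (hrange : range Φ = Ioo (-c) c) (hα : 1 < α)
    (hdecay : deriv Φ =O[atTop] fun y => y ^ (-α - 1)) :
    IntervalIntegrable (invFun Φ) volume (-c) c := by
  have hΦ0 := hodd.map_zero
  have hc : 0 < c := by
    have h0 : Φ 0 ∈ Ioo (-c) c := hrange ▸ mem_range_self 0
    rw [hΦ0] at h0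
    linarith [h0.1, h0.2]
  have hpos : IntervalIntegrable (invFun Φ) volume 0 c := by
    rw [intervalIntegrable_iff_integrableOn_Ioo_of_le hc.le, ← hmono.image_Ioi_zero hΦ0 hrange,
      integrableOn_image_iff_integrableOn_abs_deriv_smul measurableSet_Ioi
        (fun x _ => (hΦ.differentiable one_ne_zero x).hasDerivAt.hasDerivWithinAt)
        hmono.injective.injOn]
    simpa only [smul_eq_mul, leftInverse_invFun hmono.injective _]
      using integrableOn_Ioi_abs_deriv_mul hΦ hα hdecay
  have hneg : IntervalIntegrable (invFun Φ) volume (-c) 0 := by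
    have h := ((IntervalIntegrable.iff_comp_neg (by simp)).mp hpos).neg.symm
    rw [neg_zero] at h
    refine h.congr fun u hu => ?_
    rw [uIoc_of_le (by linarith : -c ≤ 0)] at hu
    simp only [Pi.neg_apply]
    rw [invFun_neg_of_odd hmono.injective hodd (hrange ▸ ⟨hu.1, by linarith [hu.2]⟩), neg_neg]
  exact hneg.trans hpos

end InverseFunction

section Primitive

variable {g : ℝ → ℝ} {c : ℝ}

lemma hasDerivAt_integral_zero (hint : IntervalIntegrable g volume (-c) c)
    (hgc : ContinuousOn g (Ioo (-c) c)) {x : ℝ} (hx : x ∈ Ioo (-c) c) :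
    HasDerivAt (fun u => ∫ s in (0 : ℝ)..u, g s) (g x) x := by
  have hc : 0 ≤ c := by linarith [hx.1, hx.2]
  exact integral_hasDerivAt_right
    (hint.mono_set (uIcc_subset_uIcc (mem_uIcc_of_le (by linarith) hc)
      (mem_uIcc_of_le hx.1.le hx.2.le)))
    (hgc.stronglyMeasurableAtFilter isOpen_Ioo x hx) (hgc.continuousAt (isOpen_Ioo.mem_nhds hx))

lemma continuousOn_integral_zero (hc : 0 ≤ c) (hint : IntervalIntegrable g volume (-c) c) :
    ContinuousOn (fun u => ∫ s in (0 : ℝ)..u, g s) (Icc (-c) c) := by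
  simpa [uIcc_of_le (by linarith : -c ≤ c)]
    using continuousOn_primitive_interval' hint (mem_uIcc_of_le (by linarith) hc)

lemma contDiffOn_integral_zero (hint : IntervalIntegrable g volume (-c) c)
    (hgc : ContinuousOn g (Ioo (-c) c)) :
    ContDiffOn ℝ 1 (fun u => ∫ s in (0 : ℝ)..u, g s) (Ioo (-c) c) := by
  rw [show (1 : WithTop ℕ∞) = 0 + 1 from rfl, contDiffOn_succ_iff_deriv_of_isOpen isOpen_Ioo]
  refine ⟨fun x hx => ?_, by simp, contDiffOn_zero.mpr (hgc.congr fun x hx => ?_)⟩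
  · exact (hasDerivAt_integral_zero hint hgc hx).differentiableAt.differentiableWithinAt
  · exact (hasDerivAt_integral_zero hint hgc hx).deriv

lemma integral_zero_neg_of_odd (hodd : ∀ u ∈ Ioo (-c) c, g (-u) = -g u) {u : ℝ} (hu : |u| ≤ c) :
    ∫ s in (0 : ℝ)..-u, g s = ∫ s in (0 : ℝ)..u, g s := by
  have h : ∫ s in (0 : ℝ)..u, g (-s) = -∫ s in (0 : ℝ)..u, g s := by
    rw [← intervalIntegral.integral_neg]
    refine integral_congr_uIoo fun s ⟨hs₁, hs₂⟩ => hodd s ⟨?_, ?_⟩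
    · exact lt_of_le_of_lt (le_min (by linarith [abs_nonneg u]) (neg_le_of_abs_le hu)) hs₁
    · exact lt_of_lt_of_le hs₂ (max_le (by linarith [abs_nonneg u]) (le_of_abs_le hu))
  rw [intervalIntegral.integral_comp_neg, neg_zero, integral_symm] at h
  linarith

lemma integral_zero_abs_of_odd (hodd : ∀ u ∈ Ioo (-c) c, g (-u) = -g u) {u : ℝ}
    (hu : |u| ≤ c) : ∫ s in (0 : ℝ)..|u|, g s = ∫ s in (0 : ℝ)..u, g s := by
  rcases abs_choice u with h | h <;> rw [h]
  exact integral_zero_neg_of_odd hodd hu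

lemma strictMonoOn_integral_zero (hc : 0 ≤ c) (hint : IntervalIntegrable g volume (-c) c)
    (hgc : ContinuousOn g (Ioo (-c) c)) (hpos : ∀ u ∈ Ioo 0 c, 0 < g u) :
    StrictMonoOn (fun u => ∫ s in (0 : ℝ)..u, g s) (Icc 0 c) := by
  refine strictMonoOn_of_deriv_pos (convex_Icc 0 c)
    ((continuousOn_integral_zero hc hint).mono (Icc_subset_Icc (by linarith) le_rfl)) ?_
  intro x hx
  rw [interior_Icc] at hx
  rw [(hasDerivAt_integral_zero hint hgc ⟨by linarith [hx.1], hx.2⟩).deriv]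
  exact hpos x hx

lemma integral_zero_le_of_abs_le (hc : 0 ≤ c) (hint : IntervalIntegrable g volume (-c) c)
    (hgc : ContinuousOn g (Ioo (-c) c)) (hodd : ∀ u ∈ Ioo (-c) c, g (-u) = -g u)
    (hpos : ∀ u ∈ Ioo 0 c, 0 < g u) {u v : ℝ} (huv : |u| ≤ v) (hv : v ≤ c) :
    ∫ s in (0 : ℝ)..u, g s ≤ ∫ s in (0 : ℝ)..v, g s := by
  rw [← integral_zero_abs_of_odd hodd (huv.trans hv)]
  exact (strictMonoOn_integral_zero hc hint hgc hpos).monotoneOn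
    ⟨abs_nonneg u, huv.trans hv⟩ ⟨(abs_nonneg u).trans huv, hv⟩ huv

lemma integral_zero_lt_of_abs_lt (hc : 0 ≤ c) (hint : IntervalIntegrable g volume (-c) c)
    (hgc : ContinuousOn g (Ioo (-c) c)) (hodd : ∀ u ∈ Ioo (-c) c, g (-u) = -g u)
    (hpos : ∀ u ∈ Ioo 0 c, 0 < g u) {u v : ℝ} (huv : |u| < v) (hv : v ≤ c) :
    ∫ s in (0 : ℝ)..u, g s < ∫ s in (0 : ℝ)..v, g s := by
  rw [← integral_zero_abs_of_odd hodd (huv.le.trans hv)]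
  exact strictMonoOn_integral_zero hc hint hgc hpos
    ⟨abs_nonneg u, huv.le.trans hv⟩ ⟨(abs_nonneg u).trans huv.le, hv⟩ huv

end Primitive

lemma HasDerivAt.exists_rpow_one_div_add_one {f : ℝ → ℝ} {f' x m : ℝ} (hf : HasDerivAt f f' x)
    (hx : 0 < f x) (hm : m + 1 ≠ 0) :
    ∃ d, HasDerivAt (fun y => f y ^ (1 / (m + 1))) d x ∧
      (f x ^ (1 / (m + 1))) ^ m * d = f' / (m + 1) := by
  refine ⟨_, hf.rpow_const (Or.inl hx.ne'), ?_⟩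
  have hexp : 1 / (m + 1) * m + (1 / (m + 1) - 1) = 0 := by field_simp; ring
  calc (f x ^ (1 / (m + 1))) ^ m * (f' * (1 / (m + 1)) * f x ^ (1 / (m + 1) - 1))
      = f x ^ (1 / (m + 1) * m + (1 / (m + 1) - 1)) * (f' * (1 / (m + 1))) := by
        rw [← rpow_mul hx.le, rpow_add hx]; ring
    _ = f' / (m + 1) := by rw [hexp, rpow_zero]; ring

section Profile

noncomputable def profile (G : ℝ → ℝ) (a m M κb σ κ : ℝ) : ℝ :=
  ((m + 1) / a * (G (a * (M - κb) + σ) - G (a * (κ - κb) + σ))) ^ (1 / (m + 1))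

variable {G g : ℝ → ℝ} {a c m M κb σ κ : ℝ}

lemma abs_affine_le (ha : 0 < a) (hσ : a * (κb - M / 2) ≤ σ) (hκ : κ ∈ Icc 0 M) :
    |a * (κ - κb) + σ| ≤ a * (M - κb) + σ :=
  abs_le.mpr ⟨by nlinarith [hκ.1], by nlinarith [hκ.2]⟩

lemma abs_affine_lt (ha : 0 < a) (hσ : a * (κb - M / 2) ≤ σ) (hκ : κ ∈ Ioo 0 M) :
    |a * (κ - κb) + σ| < a * (M - κb) + σ :=
  abs_lt.mpr ⟨by nlinarith [hκ.1], by nlinarith [hκ.2]⟩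

lemma profile_base_nonneg (ha : 0 < a) (hm : 0 < m + 1) (hσ : a * (κb - M / 2) ≤ σ)
    (hG : ∀ u, |u| ≤ a * (M - κb) + σ → G u ≤ G (a * (M - κb) + σ)) (hκ : κ ∈ Icc 0 M) :
    0 ≤ (m + 1) / a * (G (a * (M - κb) + σ) - G (a * (κ - κb) + σ)) :=
  mul_nonneg (div_pos hm ha).le (sub_nonneg.mpr (hG _ (abs_affine_le ha hσ hκ)))

lemma profile_base_pos (ha : 0 < a) (hm : 0 < m + 1) (hσ : a * (κb - M / 2) ≤ σ)
    (hG : ∀ u, |u| < a * (M - κb) + σ → G u < G (a * (M - κb) + σ)) (hκ : κ ∈ Ioo 0 M) :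
    0 < (m + 1) / a * (G (a * (M - κb) + σ) - G (a * (κ - κb) + σ)) :=
  mul_pos (div_pos hm ha) (sub_pos.mpr (hG _ (abs_affine_lt ha hσ hκ)))

lemma profile_self (hm : 0 < m + 1) : profile G a m M κb σ M = 0 := by
  rw [profile, sub_self, mul_zero, zero_rpow (one_div_pos.mpr hm).ne']

lemma continuousOn_profile (ha : 0 < a) (hm : 0 < m + 1) (hσ₁ : a * (κb - M / 2) ≤ σ)
    (hσ₂ : σ ≤ c + a * (κb - M)) (hG : ContinuousOn G (Icc (-c) c)) :
    ContinuousOn (profile G a m M κb σ) (Icc 0 M) := by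
  have hB : MapsTo (fun κ => a * (κ - κb) + σ) (Icc 0 M) (Icc (-c) c) := fun κ hκ =>
    have h := abs_le.mp (abs_affine_le ha hσ₁ hκ)
    ⟨by linarith [h.1], by linarith [h.2]⟩
  exact (continuousOn_const.mul (continuousOn_const.sub (hG.comp (by fun_prop) hB))).rpow_const
    fun _ _ => Or.inr (one_div_pos.mpr hm).le

lemma contDiffOn_profile (ha : 0 < a) (hσ₁ : a * (κb - M / 2) ≤ σ)
    (hσ₂ : σ ≤ c + a * (κb - M)) (hG : ContDiffOn ℝ 1 G (Ioo (-c) c))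
    (hpos : ∀ κ ∈ Ioo 0 M, 0 < (m + 1) / a * (G (a * (M - κb) + σ) - G (a * (κ - κb) + σ))) :
    ContDiffOn ℝ 1 (profile G a m M κb σ) (Ioo 0 M) := by
  have hB : MapsTo (fun κ => a * (κ - κb) + σ) (Ioo 0 M) (Ioo (-c) c) := fun κ hκ =>
    have h := abs_lt.mp (abs_affine_lt ha hσ₁ hκ)
    ⟨by linarith [h.1], by linarith [h.2]⟩
  exact (contDiffOn_const.mul (contDiffOn_const.sub (hG.comp (by fun_prop) hB))).rpow_const_of_ne
    fun κ hκ => (hpos κ hκ).ne'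

lemma hasDerivAt_profile (ha : 0 < a) (hm : 0 < m + 1)
    (hpos : 0 < (m + 1) / a * (G (a * (M - κb) + σ) - G (a * (κ - κb) + σ)))
    (hG : HasDerivAt G (g (a * (κ - κb) + σ)) (a * (κ - κb) + σ)) :
    ∃ d, HasDerivAt (profile G a m M κb σ) d κ ∧
      profile G a m M κb σ κ ^ m * d = -g (a * (κ - κb) + σ) := by
  have hB : HasDerivAt (fun κ => a * (κ - κb) + σ) a κ := by
    simpa using (((hasDerivAt_id κ).sub_const κb).const_mul a).add_const σ
  obtain ⟨d, hd, hd'⟩ := (((hasDerivAt_const κ _).sub (hG.comp κ hB)).const_mul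
    ((m + 1) / a)).exists_rpow_one_div_add_one hpos hm.ne'
  refine ⟨d, hd, hd'.trans ?_⟩
  field_simp
  ring

end Profile

section Solution

variable {U h κf : ℝ → ℝ} {m M : ℝ}

lemma pos_of_hasDerivAt_of_eventually_nonneg {f : ℝ → ℝ} {x d : ℝ} (hf : HasDerivAt f d x)
    (hd : d ≠ 0) (hnonneg : ∀ᶠ y in 𝓝 x, 0 ≤ f y) : 0 < f x := by
  refine hnonneg.self_of_nhds.lt_of_ne fun h0 => hd ?_
  exact IsLocalMin.hasDerivAt_eq_zero (hnonneg.mono fun y hy => h0 ▸ hy) hf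

lemma deriv_comp_solution (hU : ∀ κ ∈ Ioo 0 M, ∃ d, HasDerivAt U d κ ∧ U κ ^ m * d = h κ)
    {ξ : ℝ} (hκf : HasDerivAt κf (U (κf ξ)) ξ) (hmem : ∀ᶠ ζ in 𝓝 ξ, κf ζ ∈ Ico 0 M)
    (hpos : 0 < U (κf ξ)) :
    deriv κf ξ = U (κf ξ) ∧ U (κf ξ) ^ (m - 1) * deriv (fun ζ => U (κf ζ)) ξ = h (κf ξ) := by
  have hκ : κf ξ ∈ Ioo 0 M :=
    ⟨pos_of_hasDerivAt_of_eventually_nonneg hκf hpos.ne' (hmem.mono fun _ hζ => hζ.1),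
      hmem.self_of_nhds.2⟩
  obtain ⟨d, hd, hUd⟩ := hU _ hκ
  have hcomp : HasDerivAt (fun ζ => U (κf ζ)) (d * U (κf ξ)) ξ := hd.comp ξ hκf
  refine ⟨hκf.deriv, ?_⟩
  rw [hcomp.deriv, ← hUd, rpow_sub_one hpos.ne']
  field_simp

lemma solution_deriv_and_tendsto (hUc : ContinuousWithinAt U (Icc 0 M) M) (hUM : U M = 0)
    (hU : ∀ κ ∈ Ioo 0 M, ∃ d, HasDerivAt U d κ ∧ U κ ^ m * d = h κ)
    (ξm : ℝ) (ξp : EReal) (hξ : (ξm : EReal) < ξp)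
    (hder : ∀ ξ : ℝ, ξm ≤ ξ → (ξ : EReal) < ξp → HasDerivAt κf (U (κf ξ)) ξ)
    (hmem : ∀ ξ : ℝ, ξm ≤ ξ → (ξ : EReal) < ξp → κf ξ ∈ Ico 0 M)
    (hlim : Tendsto κf (comap (fun ξ : ℝ => (ξ : EReal)) (𝓝[<] ξp)) (𝓝 M)) :
    (∀ ξ : ℝ, ξm < ξ → (ξ : EReal) < ξp → 0 < U (κf ξ) →
      deriv κf ξ = U (κf ξ) ∧ U (κf ξ) ^ (m - 1) * deriv (fun ζ => U (κf ζ)) ξ = h (κf ξ)) ∧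
    Tendsto (fun ξ => U (κf ξ)) (comap (fun ξ : ℝ => (ξ : EReal)) (𝓝[<] ξp)) (𝓝 0) := by
  refine ⟨fun ξ hξm hξp hpos => deriv_comp_solution hU (hder ξ hξm.le hξp) ?_ hpos, ?_⟩
  · filter_upwards [lt_mem_nhds hξm,
      (continuous_coe_real_ereal.tendsto ξ).eventually (eventually_lt_nhds hξp)] with ζ h₁ h₂
    exact hmem ζ h₁.le h₂
  · have hdom : ∀ᶠ ξ in comap (fun ξ : ℝ => (ξ : EReal)) (𝓝[<] ξp), ξm ≤ ξ ∧ (ξ : EReal) < ξp := by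
      filter_upwards [preimage_mem_comap (inter_mem_nhdsWithin _ (lt_mem_nhds hξ))] with ξ hξ
      exact ⟨EReal.coe_le_coe_iff.mp hξ.2.le, hξ.1⟩
    rw [← hUM]
    exact hUc.tendsto.comp (tendsto_nhdsWithin_iff.mpr
      ⟨hlim, hdom.mono fun ξ hξ => Ico_subset_Icc_self (hmem ξ hξ.1 hξ.2)⟩)

end Solution

theorem stmt_17_general (c α : ℝ) (hc : 0 < c) (hα : 2 ≤ α)
    (Φ : ℝ → ℝ) (hΦ : ContDiff ℝ 2 Φ)
    (hodd : ∀ y : ℝ, Φ (-y) = -Φ y)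
    (hΦ' : ∀ y : ℝ, 0 < deriv Φ y)
    (hlim : Filter.Tendsto Φ Filter.atTop (nhds c))
    (C₀ y₀ : ℝ)
    (hdecay : ∀ y : ℝ, y₀ ≤ y → deriv Φ y ≤ C₀ * y ^ (-α - 1))
    (a m : ℝ) (ha : 0 < a) (hm : 0 ≤ m)
    (M κb σ : ℝ) (hM : 0 < M)
    (hσ1 : a * (κb - M / 2) ≤ σ) (hσ2 : σ ≤ c + a * (κb - M)) :
    let g : ℝ → ℝ := Function.invFun Φ
    let G : ℝ → ℝ := fun u => ∫ s in (0:ℝ)..u, g s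
    let U : ℝ → ℝ := fun κ =>
      (((m + 1) / a) * (G (a * (M - κb) + σ) - G (a * (κ - κb) + σ))) ^ (1 / (m + 1))
    (∀ κ ∈ Set.Icc (0:ℝ) M,
      0 ≤ ((m + 1) / a) * (G (a * (M - κb) + σ) - G (a * (κ - κb) + σ))) ∧
    ContinuousOn U (Set.Icc 0 M) ∧
    ContDiffOn ℝ 1 U (Set.Ioo 0 M) ∧
    U M = 0 ∧
    (∀ κ ∈ Set.Ioo (0:ℝ) M, 0 < U κ) ∧
    (∀ κ ∈ Set.Ioo (0:ℝ) M, (U κ) ^ m * deriv U κ = -g (a * (κ - κb) + σ)) ∧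
    (∀ ξm : ℝ, ∀ ξp : EReal, (ξm : EReal) < ξp →
      ∀ κf : ℝ → ℝ,
        (∀ ξ : ℝ, ξm ≤ ξ → (ξ : EReal) < ξp → HasDerivAt κf (U (κf ξ)) ξ) →
        (∀ ξ : ℝ, ξm ≤ ξ → (ξ : EReal) < ξp → κf ξ ∈ Set.Ico (0:ℝ) M) →
        κf ξm = 0 →
        Filter.Tendsto κf
          (Filter.comap (fun ξ : ℝ => (ξ : EReal))
            (nhdsWithin ξp {x : EReal | x < ξp})) (nhds M) →
        ((∀ ξ : ℝ, ξm < ξ → (ξ : EReal) < ξp → 0 < U (κf ξ) →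
            deriv κf ξ = U (κf ξ) ∧
            (U (κf ξ)) ^ (m - 1) * deriv (fun ζ : ℝ => U (κf ζ)) ξ
              = -g (a * (κf ξ - κb) + σ)) ∧
          Filter.Tendsto (fun ξ : ℝ => U (κf ξ))
            (Filter.comap (fun ξ : ℝ => (ξ : EReal))
              (nhdsWithin ξp {x : EReal | x < ξp})) (nhds 0))) := by
  intro g G U
  have hmono : StrictMono Φ := strictMono_of_deriv_pos hΦ'
  have hrange : range Φ = Ioo (-c) c :=
    hmono.range_eq_Ioo_of_tendsto hΦ.continuous (tendsto_atBot_of_odd hodd hlim) hlim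
  have hint : IntervalIntegrable g volume (-c) c :=
    intervalIntegrable_invFun (hΦ.of_le (by norm_num)) hmono hodd hrange (by linarith)
      (isBigO_rpow_of_le (fun y => (hΦ' y).le) hdecay)
  have hgc : ContinuousOn g (Ioo (-c) c) := fun u hu =>
    (hmono.continuousAt_invFun (hrange ▸ isOpen_Ioo.mem_nhds hu)).continuousWithinAt
  have hgodd : ∀ u ∈ Ioo (-c) c, g (-u) = -g u := fun u hu =>
    invFun_neg_of_odd hmono.injective hodd (hrange ▸ hu)
  have hgpos : ∀ u ∈ Ioo 0 c, 0 < g u := fun u hu =>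
    invFun_pos hmono (Function.Odd.map_zero hodd) (hrange ▸ ⟨by linarith [hu.1], hu.2⟩) hu.1
  have hA : a * (M - κb) + σ ≤ c := by linarith
  have hm1 : 0 < m + 1 := by linarith
  have hbase : ∀ κ ∈ Ioo 0 M, 0 < (m + 1) / a * (G (a * (M - κb) + σ) - G (a * (κ - κb) + σ)) :=
    fun κ => profile_base_pos ha hm1 hσ1 fun u hu =>
      integral_zero_lt_of_abs_lt hc.le hint hgc hgodd hgpos hu hA
  have hUd : ∀ κ ∈ Ioo 0 M, ∃ d, HasDerivAt U d κ ∧ U κ ^ m * d = -g (a * (κ - κb) + σ) :=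
    fun κ hκ => hasDerivAt_profile ha hm1 (hbase κ hκ)
      (hasDerivAt_integral_zero hint hgc (abs_lt.mp ((abs_affine_lt ha hσ1 hκ).trans_le hA)))
  have hUc : ContinuousOn U (Icc 0 M) :=
    continuousOn_profile ha hm1 hσ1 hσ2 (continuousOn_integral_zero hc.le hint)
  refine ⟨fun κ => profile_base_nonneg ha hm1 hσ1 fun u hu =>
      integral_zero_le_of_abs_le hc.le hint hgc hgodd hgpos hu hA,
    hUc, contDiffOn_profile ha hσ1 hσ2 (contDiffOn_integral_zero hint hgc) hbase,
    profile_self hm1, fun κ hκ => rpow_pos_of_pos (hbase κ hκ) _, fun κ hκ => ?_,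
    fun ξm ξp hξ κf hder hmem _ =>
      solution_deriv_and_tendsto (hUc M ⟨hM.le, le_rfl⟩) (profile_self hm1) hUd ξm ξp hξ hder hmem⟩
  obtain ⟨d, hd, hUd⟩ := hUd κ hκ
  rwa [hd.deriv]

theorem stmt_17 (c α : ℝ) (hc : 0 < c) (hα : 2 ≤ α)
    (Φ : ℝ → ℝ) (hΦ : ContDiff ℝ 2 Φ)
    (hodd : ∀ y : ℝ, Φ (-y) = -Φ y)
    (hΦ' : ∀ y : ℝ, 0 < deriv Φ y)
    (hlim : Filter.Tendsto Φ Filter.atTop (nhds c))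
    (C₀ y₀ : ℝ) (hC₀ : 0 < C₀) (hy₀ : 0 < y₀)
    (hdecay : ∀ y : ℝ, y₀ ≤ y → deriv Φ y ≤ C₀ * y ^ (-α - 1))
    (a m : ℝ) (ha : 0 < a) (hm : 0 ≤ m)
    (M κb σ : ℝ) (hM : 0 < M) (hM2 : M ≤ 2 * c / a) (hκb : κb ∈ Set.Ioo (0:ℝ) M)
    (hσ1 : a * (κb - M / 2) ≤ σ) (hσ2 : σ ≤ c + a * (κb - M)) :
    let g : ℝ → ℝ := Function.invFun Φ
    let G : ℝ → ℝ := fun u => ∫ s in (0:ℝ)..u, g s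
    let U : ℝ → ℝ := fun κ =>
      (((m + 1) / a) * (G (a * (M - κb) + σ) - G (a * (κ - κb) + σ))) ^ (1 / (m + 1))
    (∀ κ ∈ Set.Icc (0:ℝ) M,
      0 ≤ ((m + 1) / a) * (G (a * (M - κb) + σ) - G (a * (κ - κb) + σ))) ∧
    ContinuousOn U (Set.Icc 0 M) ∧
    ContDiffOn ℝ 1 U (Set.Ioo 0 M) ∧
    U M = 0 ∧
    (∀ κ ∈ Set.Ioo (0:ℝ) M, 0 < U κ) ∧
    (∀ κ ∈ Set.Ioo (0:ℝ) M, (U κ) ^ m * deriv U κ = -g (a * (κ - κb) + σ)) ∧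
    (∀ ξm : ℝ, ∀ ξp : EReal, (ξm : EReal) < ξp →
      ∀ κf : ℝ → ℝ,
        (∀ ξ : ℝ, ξm ≤ ξ → (ξ : EReal) < ξp → HasDerivAt κf (U (κf ξ)) ξ) →
        (∀ ξ : ℝ, ξm ≤ ξ → (ξ : EReal) < ξp → κf ξ ∈ Set.Ico (0:ℝ) M) →
        κf ξm = 0 →
        Filter.Tendsto κf
          (Filter.comap (fun ξ : ℝ => (ξ : EReal))
            (nhdsWithin ξp {x : EReal | x < ξp})) (nhds M) →
        ((∀ ξ : ℝ, ξm < ξ → (ξ : EReal) < ξp → 0 < U (κf ξ) →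
            deriv κf ξ = U (κf ξ) ∧
            (U (κf ξ)) ^ (m - 1) * deriv (fun ζ : ℝ => U (κf ζ)) ξ
              = -g (a * (κf ξ - κb) + σ)) ∧
          Filter.Tendsto (fun ξ : ℝ => U (κf ξ))
            (Filter.comap (fun ξ : ℝ => (ξ : EReal))
              (nhdsWithin ξp {x : EReal | x < ξp})) (nhds 0))) :=
  stmt_17_general c α hc hα Φ hΦ hodd hΦ' hlim C₀ y₀ hdecay a m ha hm M κb σ hM hσ1 hσ2
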